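/- arXiv:2004.05139 — 9 statements merged into one kernel-verified Lean document; each statement's English description precedes it below -/
import Mathlib

section
/- For every natural number n, the function f : ℤ → ℤ defined by f(x) = lcm(1,...,n) · C(x, n) preserves all congruences of ℤ, i.e., for all integers x and all nonzero integers k, k divides f(x+k) - f(x). -/
/-- lcm(1,...,n), with value 1 for n = 0. -/
noncomputable def lcmUpTo (n : ℕ) : ℕ := (Finset.Icc 1 n).lcm id

/-!
By Vandermonde, `C(x + k, n) - C(x, n) = ∑_{i + j = n, j ≥ 1} C(x, i) C(k, j)`, and the absorption
identity `j C(k, j) = k C(k - 1, j - 1)` shows that `k` divides `j C(k, j)`, hence `d C(k, j)`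
for every multiple `d` of `j`, such as `d = lcm(1, …, n)` when `1 ≤ j ≤ n`.
-/

open Finset

namespace Ring

variable {R : Type*} [Ring R] [BinomialRing R]

theorem succ_nsmul_choose_succ (r : R) (m : ℕ) :
    (m + 1) • choose r (m + 1) = r * choose (r - 1) m := by
  simpa using choose_smul_choose r (Nat.le_add_left 1 m)

theorem choose_add_sub_choose_succ {r s : R} (h : Commute r s) (n : ℕ) :
    choose (r + s) (n + 1) - choose r (n + 1) =
      ∑ p ∈ antidiagonal n, choose r p.1 * choose s (p.2 + 1) := by
  rw [add_choose_eq _ h, Nat.sum_antidiagonal_succ', choose_zero_right, mul_one,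
    add_sub_cancel_left]

end Ring

theorem Ring.dvd_mul_choose_succ_of_dvd {R : Type*} [CommRing R] [BinomialRing R] (r : R)
    {m : ℕ} {d : R} (hd : ((m + 1 : ℕ) : R) ∣ d) : r ∣ d * choose r (m + 1) := by
  have absorb : r ∣ ((m + 1 : ℕ) : R) * choose r (m + 1) :=
    ⟨_, by rw [← nsmul_eq_mul, succ_nsmul_choose_succ]⟩
  exact absorb.trans (mul_dvd_mul_right hd _)

theorem dvd_lcmUpTo {j n : ℕ} (hj : 1 ≤ j) (hjn : j ≤ n) : j ∣ lcmUpTo n :=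
  dvd_lcm (mem_Icc.mpr ⟨hj, hjn⟩)

/-- The function x ↦ lcm(1,...,n)·C(x,n) preserves all congruences of ℤ. -/
theorem lcm_mul_choose_congruence_preserving (n : ℕ) :
    ∀ (x k : ℤ), k ≠ 0 →
      k ∣ (lcmUpTo n : ℤ) * Ring.choose (x + k) n -
            (lcmUpTo n : ℤ) * Ring.choose x n := by
  intro x k _
  cases n with
  | zero => simp
  | succ n =>
    rw [← mul_sub, Ring.choose_add_sub_choose_succ (Commute.all x k), mul_sum]
    refine dvd_sum fun p hp => ?_
    have hj : p.2 + 1 ∣ lcmUpTo (n + 1) :=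
      dvd_lcmUpTo (Nat.le_add_left 1 _)
        (Nat.succ_le_succ (HasAntidiagonal.antidiagonal.snd_le hp))
    rw [mul_left_comm]
    exact dvd_mul_of_dvd_right
      (Ring.dvd_mul_choose_succ_of_dvd k (Int.natCast_dvd_natCast.mpr hj)) _
end

section
/- If a polynomial P of the form P(x) = Σ_{k=0}^{n} λ_k · C(x, k) with integer coefficients λ_k satisfies that P(j) - P(j') is divisible by j - j' for all distinct j, j' in {0, 1, ..., n}, then for each k, λ_k is an integer multiple of lcm(1, ..., k). -/
/-!
Put `f j = P j` on the naturals. Newton's formula gives `λ_k = Δᵏ f 0`, so it suffices that every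
`1 ≤ m ≤ k` divides `Δᵏ f 0 = Δᵐ g 0`, where `g = Δᵏ⁻ᵐ f`. Forward differences preserve the property
`x - y ∣ f x - f y` (on a range shrinking by one at each step), so `i ∣ g i - g 0` for all `i ≤ m`.
Since `Δᵐ` kills constants, `Δᵐ g 0 = ∑ᵢ (-1)ᵐ⁻ⁱ C(m, i) (g i - g 0)`, and each term is a multiple
of `m` because `m ∣ C(m, i) · i`.
-/

open Finset fwdDiff

theorem Nat.dvd_choose_mul (m i : ℕ) : m ∣ m.choose i * i := by
  rcases m with _ | m
  · rcases i with _ | i <;> simp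
  rcases i with _ | i
  · simp
  exact ⟨m.choose i, (Nat.add_one_mul_choose_eq m i).symm⟩

theorem fwdDiff_iter_const {M G : Type*} [AddCommMonoid M] [AddCommGroup G] {m : ℕ} (hm : m ≠ 0)
    (h : M) (c : G) : (Δ_[h])^[m] (fun _ : M => c) = 0 := by
  obtain ⟨m, rfl⟩ := Nat.exists_eq_succ_of_ne_zero hm
  rw [Function.iterate_succ_apply, fwdDiff_const]
  exact Function.iterate_fixed (fwdDiff_const h (0 : G)) m

theorem fwdDiff_iter_sum_mul_choose_zero (lam : ℕ → ℤ) {n k : ℕ} (hk : k ≤ n) :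
    (Δ_[1])^[k] (fun x : ℕ => ∑ i ∈ range (n + 1), lam i * (x.choose i : ℤ)) 0 = lam k := by
  have hsum : (fun x : ℕ => ∑ i ∈ range (n + 1), lam i * (x.choose i : ℤ))
      = ∑ i ∈ range (n + 1), lam i • fun x : ℕ => (x.choose i : ℤ) := by
    ext x
    simp
  simp only [hsum, fwdDiff_iter_finsetSum, fwdDiff_iter_const_smul, Finset.sum_apply,
    Pi.smul_apply, fwdDiff_iter_choose_zero, smul_eq_mul, mul_ite, mul_one, mul_zero]
  rw [sum_ite_eq, if_pos (mem_range.mpr (Nat.lt_succ_of_le hk))]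

section CongrPreserving

variable {R : Type*} [CommRing R]

def CongrPreservingUpTo (N : ℕ) (f : ℕ → R) : Prop :=
  ∀ x y, x ≤ N → y ≤ N → ((x : R) - y) ∣ f x - f y

theorem dvd_fwdDiff_iter_zero_of_dvd {m : ℕ} {g : ℕ → R} (hg : ∀ i ≤ m, (i : R) ∣ g i) :
    (m : R) ∣ (Δ_[1])^[m] g 0 := by
  rw [fwdDiff_iter_eq_sum_shift]
  refine dvd_sum fun i hi => ?_
  obtain ⟨h, hh⟩ := hg i (by simpa [Nat.lt_succ_iff] using hi)
  obtain ⟨c, hc⟩ := Nat.dvd_choose_mul m i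
  have hc' : (m.choose i : R) * i = m * c := by rw [← Nat.cast_mul, hc, Nat.cast_mul]
  rw [zero_add, smul_eq_mul, mul_one, hh, zsmul_eq_mul]
  exact ⟨(-1) ^ (m - i) * c * h, by push_cast; linear_combination (-1) ^ (m - i) * h * hc'⟩

namespace CongrPreservingUpTo

variable {f : ℕ → R}

theorem mono {M N : ℕ} (hMN : M ≤ N) (hf : CongrPreservingUpTo N f) : CongrPreservingUpTo M f :=
  fun x y hx hy => hf x y (hx.trans hMN) (hy.trans hMN)

theorem fwdDiff {N : ℕ} (hf : CongrPreservingUpTo (N + 1) f) :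
    CongrPreservingUpTo N (Δ_[1] f) := by
  intro x y hx hy
  have hshift := hf (x + 1) (y + 1) (by omega) (by omega)
  push_cast at hshift
  rw [add_sub_add_right_eq_sub] at hshift
  simpa only [_root_.fwdDiff, sub_sub_sub_comm] using
    dvd_sub hshift (hf x y (by omega) (by omega))

theorem fwdDiff_iter {N : ℕ} (r : ℕ) (hf : CongrPreservingUpTo (N + r) f) :
    CongrPreservingUpTo N ((Δ_[1])^[r] f) := by
  induction r generalizing f with
  | zero => exact hf
  | succ r ih =>
    rw [Function.iterate_succ_apply]
    exact ih (fwdDiff (by rwa [← add_assoc] at hf))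

theorem dvd_fwdDiff_iter_self {m : ℕ} (hm : m ≠ 0) (hf : CongrPreservingUpTo m f) :
    (m : R) ∣ (Δ_[1])^[m] f 0 := by
  have hsplit : f = (fun x => f x - f 0) + fun _ => f 0 := by
    ext
    simp
  rw [hsplit, fwdDiff_iter_add, fwdDiff_iter_const hm, add_zero]
  exact dvd_fwdDiff_iter_zero_of_dvd fun i hi => by simpa using hf i 0 hi (Nat.zero_le m)

theorem dvd_fwdDiff_iter {m k n : ℕ} (hf : CongrPreservingUpTo n f) (hm : m ≠ 0) (hmk : m ≤ k)
    (hkn : k ≤ n) : (m : R) ∣ (Δ_[1])^[k] f 0 := by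
  obtain ⟨r, rfl⟩ := Nat.exists_eq_add_of_le hmk
  rw [Function.iterate_add_apply]
  exact ((hf.mono hkn).fwdDiff_iter r).dvd_fwdDiff_iter_self hm

end CongrPreservingUpTo

end CongrPreserving

/-- If P(x) = Σ_{k=0}^{n} λ_k·C(x,k) with integer coefficients satisfies that
P(j) - P(j') is divisible by j - j' for all distinct j,j' ∈ {0,...,n},
then each λ_k is a multiple of lcm(1,...,k). -/
theorem coeff_multiple_of_lcm (n : ℕ) (lam : ℕ → ℤ)
    (P : ℤ → ℤ)
    (hP : ∀ x : ℤ, P x = ∑ k ∈ Finset.range (n + 1), lam k * Ring.choose x k)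
    (hdiv : ∀ j j' : ℕ, j ≤ n → j' ≤ n → j ≠ j' →
      ((j : ℤ) - (j' : ℤ)) ∣ P (j : ℤ) - P (j' : ℤ)) :
    ∀ k : ℕ, k ≤ n → (lcmUpTo k : ℤ) ∣ lam k := by
  intro k hk
  have hf : CongrPreservingUpTo n fun j : ℕ => P j := fun j j' hj hj' => by
    rcases eq_or_ne j j' with rfl | hne
    · simp
    · exact hdiv j j' hj hj' hne
  have hlam : (Δ_[1])^[k] (fun j : ℕ => P j) 0 = lam k := by
    simp only [hP, Ring.choose_natCast]
    exact fwdDiff_iter_sum_mul_choose_zero lam hk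
  rw [← hlam, Int.natCast_dvd]
  refine Finset.lcm_dvd fun m hm => Int.natCast_dvd.mp ?_
  obtain ⟨hm1, hmk⟩ := Finset.mem_Icc.mp hm
  exact hf.dvd_fwdDiff_iter (Nat.one_le_iff_ne_zero.mp hm1) hmk hk
end

section
/- Let f(x) = λ · C(x, k) for an integer λ and positive integer k. If f preserves the congruences modulo i for all i = 1, ..., k (i.e., i divides f(x) - f(y) whenever i divides x - y), then λ is a multiple of lcm(1, ..., k). -/
/-- If f(x) = λ·C(x,k) preserves the congruences modulo i for all i = 1,...,k,
then λ is a multiple of lcm(1,...,k). -/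
theorem lcm_dvd_of_preserves_small_congruences (lam : ℤ) (k : ℕ) (hk : 0 < k)
    (f : ℤ → ℤ) (hf : ∀ x : ℤ, f x = lam * Ring.choose x k)
    (hpres : ∀ i : ℕ, 1 ≤ i → i ≤ k → ∀ x y : ℤ, (i : ℤ) ∣ x - y →
      (i : ℤ) ∣ f x - f y) :
    (lcmUpTo k : ℤ) ∣ lam := by
  have key : ∀ i ∈ Finset.Icc 1 k, (i : ℤ) ∣ lam := by
    intro i hi
    rw [Finset.mem_Icc] at hi
    have h := hpres i hi.1 hi.2 (k : ℤ) ((k - i : ℕ) : ℤ) ?_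
    · rw [hf, hf, Ring.choose_natCast, Ring.choose_natCast, Nat.choose_self,
        Nat.choose_eq_zero_of_lt (by omega)] at h
      simpa using h
    · push_cast [Nat.cast_sub hi.2]
      exact ⟨1, by ring⟩
  have : (lcmUpTo k : ℕ) ∣ lam.natAbs := by
    apply Finset.lcm_dvd
    intro i hi
    simpa [Int.natCast_dvd_natCast.symm, Int.dvd_natAbs] using key i hi
  exact (Int.natAbs_dvd.symm.trans Int.dvd_natAbs).mp (Int.natCast_dvd_natCast.mpr this)
end

section
/- A polynomial function f : ℤ → ℤ of degree n that preserves the congruences modulo k for all k = 1, ..., n preserves all congruences of ℤ. -/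
open Polynomial Finset Function

-- iterated fwdDiff of zero function
lemma fwdDiff_iter_zero_fun (j : ℕ) (y : ℤ) :
    (fwdDiff (1:ℤ))^[j] (fun _ => (0:ℤ)) y = 0 := by
  induction j generalizing y with
  | zero => simp
  | succ j ih => rw [Function.iterate_succ_apply]; simp [fwdDiff, ih]

-- Newton difference formula
lemma newton_diff (f : ℤ → ℤ) (z : ℕ) (y : ℤ) :
    f (y + z) - f y = ∑ k ∈ Finset.Ico 1 (z+1), (z.choose k : ℤ) * (fwdDiff (1:ℤ))^[k] f y := by
  have h := shift_eq_sum_fwdDiff_iter (1:ℤ) f z y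
  simp only [nsmul_eq_mul, mul_one] at h
  rw [Finset.range_eq_Ico, Finset.sum_eq_sum_Ico_succ_bot (by omega)] at h
  simp only [Nat.choose_zero_right, one_smul, Function.iterate_zero, id_eq] at h
  rw [h]
  norm_num

lemma comp_sub_natDegree (P : Polynomial ℚ) (n : ℕ) (h : P.natDegree ≤ n + 1) :
    (P.comp (X + C 1) - P).natDegree ≤ n := by
  by_cases h0 : P.natDegree = 0
  · obtain ⟨a, rfl⟩ := Polynomial.natDegree_eq_zero.mp h0
    simp
  · have hP0 : P ≠ 0 := fun h' => h0 (by simp [h'])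
    have hq : (X + C (1:ℚ)).natDegree = 1 := Polynomial.natDegree_X_add_C 1
    have hlc : (P.comp (X + C 1)).leadingCoeff = P.leadingCoeff := by
      rw [Polynomial.leadingCoeff_comp (by rw [hq]; norm_num),
        Polynomial.leadingCoeff_X_add_C, one_pow, mul_one]
    have hc0 : P.comp (X + C 1) ≠ 0 := by
      intro h'
      apply hP0
      rw [← Polynomial.leadingCoeff_eq_zero, ← hlc, h', Polynomial.leadingCoeff_zero]
    have hnd : (P.comp (X + C 1)).natDegree = P.natDegree := by
      rw [Polynomial.natDegree_comp, hq, mul_one]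
    have hdeg : (P.comp (X + C 1)).degree = P.degree := by
      rw [Polynomial.degree_eq_natDegree hc0, Polynomial.degree_eq_natDegree hP0, hnd]
    have hlt := Polynomial.degree_sub_lt hdeg hc0 hlc
    rw [hdeg] at hlt
    by_cases hQ : P.comp (X + C 1) - P = 0
    · rw [hQ]; simp
    · have := Polynomial.natDegree_lt_natDegree hQ hlt
      omega

lemma fwdDiff_vanish : ∀ (n : ℕ) (P : Polynomial ℚ) (f : ℤ → ℤ),
    (∀ x : ℤ, (f x : ℚ) = P.eval (x:ℚ)) → P.natDegree ≤ n → ∀ y,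
    (fwdDiff (1:ℤ))^[n+1] f y = 0 := by
  intro n
  induction n with
  | zero =>
    intro P f hPf hd y
    obtain ⟨a, rfl⟩ := Polynomial.natDegree_eq_zero.mp (Nat.le_zero.mp hd)
    have hfy : f (y + 1) = f y := by
      have h1 := hPf (y + 1)
      have h2 := hPf y
      simp only [Polynomial.eval_C] at h1 h2
      exact_mod_cast h1.trans h2.symm
    simp [fwdDiff, hfy]
  | succ n ih =>
    intro P f hPf hd y
    rw [Function.iterate_succ_apply]
    refine ih (P.comp (X + C 1) - P) (fwdDiff 1 f) (fun x => ?_) (comp_sub_natDegree P n hd) y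
    show ((f (x + 1) - f x : ℤ) : ℚ) = _
    push_cast
    rw [hPf, hPf, Polynomial.eval_sub, Polynomial.eval_comp]
    push_cast
    simp

lemma nat_dvd_mul_choose : ∀ (z k : ℕ), 1 ≤ k → z ∣ k * z.choose k
  | 0, k, hk => by
    cases k with
    | zero => omega
    | succ b => simp
  | a+1, b+1, _ => ⟨a.choose b, by rw [mul_comm]; exact (Nat.add_one_mul_choose_eq a b).symm⟩

/-- A polynomial function ℤ → ℤ of degree n preserving the congruences modulo
k for k = 1,...,n preserves all congruences of ℤ. -/
theorem preserves_all_congruences_of_preserves_small (n : ℕ)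
    (P : Polynomial ℚ) (f : ℤ → ℤ)
    (hPf : ∀ x : ℤ, (f x : ℚ) = P.eval (x : ℚ))
    (hdeg : P.natDegree = n)
    (hpres : ∀ k : ℕ, 1 ≤ k → k ≤ n → ∀ x y : ℤ, (k : ℤ) ∣ x - y →
      (k : ℤ) ∣ f x - f y) :
    ∀ m : ℕ, 0 < m → ∀ x y : ℤ, (m : ℤ) ∣ x - y → (m : ℤ) ∣ f x - f y := by
  have keyB : ∀ i, 1 ≤ i → i ≤ n → ∀ y : ℤ, (i:ℤ) ∣ (fwdDiff (1:ℤ))^[i] f y := by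
    intro i
    induction i using Nat.strong_induction_on with
    | _ i IH =>
      intro hi1 hin y
      have h1 : (i:ℤ) ∣ f (y + i) - f y := hpres i hi1 hin (y+i) y (by simp)
      rw [newton_diff, Finset.sum_Ico_succ_top hi1] at h1
      have hsum : (i:ℤ) ∣ ∑ k ∈ Finset.Ico 1 i, (i.choose k : ℤ) * (fwdDiff 1)^[k] f y := by
        refine Finset.dvd_sum fun k hk => ?_
        obtain ⟨hk1, hki⟩ := Finset.mem_Ico.mp hk
        obtain ⟨c, hc⟩ := IH k hki hk1 (by omega) y
        rw [hc]
        have hd : (i:ℤ) ∣ ((k * i.choose k : ℕ) : ℤ) :=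
          Int.natCast_dvd_natCast.mpr (nat_dvd_mul_choose i k hk1)
        have he : (i.choose k : ℤ) * ((k:ℤ) * c) = ((k * i.choose k : ℕ) : ℤ) * c := by
          push_cast; ring
        rw [he]
        exact hd.mul_right c
      rw [Nat.choose_self] at h1
      simp only [Nat.cast_one, one_mul] at h1
      exact (dvd_add_right hsum).mp h1
  have hvan : ∀ k, n < k → ∀ y : ℤ, (fwdDiff (1:ℤ))^[k] f y = 0 := by
    intro k hk y
    have hv : (fwdDiff (1:ℤ))^[n+1] f = fun _ => 0 :=
      funext (fwdDiff_vanish n P f hPf hdeg.le)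
    rw [show k = (k - (n+1)) + (n+1) by omega, Function.iterate_add_apply, hv,
      fwdDiff_iter_zero_fun]
  have main : ∀ (y : ℤ) (m : ℕ) (z : ℕ), (m:ℤ) ∣ (z:ℤ) → (m:ℤ) ∣ f (y + z) - f y := by
    intro y m z hz
    rw [newton_diff]
    refine Finset.dvd_sum fun k hk => ?_
    obtain ⟨hk1, _⟩ := Finset.mem_Ico.mp hk
    by_cases hkn : k ≤ n
    · obtain ⟨c, hc⟩ := keyB k hk1 hkn y
      rw [hc]
      have hd : (m:ℤ) ∣ ((k * z.choose k : ℕ) : ℤ) :=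
        hz.trans (Int.natCast_dvd_natCast.mpr (nat_dvd_mul_choose z k hk1))
      have he : (z.choose k : ℤ) * ((k:ℤ) * c) = ((k * z.choose k : ℕ) : ℤ) * c := by
        push_cast; ring
      rw [he]
      exact hd.mul_right c
    · rw [hvan k (by omega) y, mul_zero]; exact dvd_zero _
  intro m hm x y hxy
  rcases le_total y x with hle | hle
  · have hz : ((x - y).toNat : ℤ) = x - y := Int.toNat_of_nonneg (by omega)
    have h := main y m (x - y).toNat (by rw [hz]; exact hxy)
    rwa [hz, show y + (x - y) = x by ring] at h
  · have hz : ((y - x).toNat : ℤ) = y - x := Int.toNat_of_nonneg (by omega)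
    have h := main x m (y - x).toNat (by rw [hz]; exact (dvd_sub_comm).mp hxy)
    rw [hz, show x + (y - x) = y by ring] at h
    exact (dvd_sub_comm).mp h
end

section
/- Let E be a set with |E| ≠ 2. If a self-map f of E preserves every equivalence relation of the form ⟨x,y⟩ (the equivalence whose only nontrivial class is {x,y}) for all distinct x, y ∈ E, then f is the identity or a constant map. -/
/-- Pierce's semirigidity lemma: on a set E with |E| ≠ 2, a self-map preserving
every equivalence relation ⟨x,y⟩ (whose only nontrivial class is {x,y}) is the
identity or a constant map. -/
theorem pierce_semirigid {E : Type*} (hcard : Nat.card E ≠ 2) (f : E → E)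
    (hpres : ∀ x y : E, x ≠ y → ∀ a b : E,
      (a = b ∨ (a = x ∧ b = y) ∨ (a = y ∧ b = x)) →
      (f a = f b ∨ (f a = x ∧ f b = y) ∨ (f a = y ∧ f b = x))) :
    (∀ z : E, f z = z) ∨ (∃ c : E, ∀ z : E, f z = c) := by
  by_cases hid : ∀ z : E, f z = z
  · exact Or.inl hid
  push_neg at hid
  obtain ⟨w, hw⟩ := hid
  have key : ∀ x y : E, x ≠ y →
      f x = f y ∨ (f x = x ∧ f y = y) ∨ (f x = y ∧ f y = x) := fun x y h =>
    hpres x y h x y (Or.inr (Or.inl ⟨rfl, rfl⟩))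
  -- there is a third element distinct from w and f w
  have h3 : ∃ z : E, z ≠ w ∧ z ≠ f w := by
    by_contra h
    push_neg at h
    have huniv : (Set.univ : Set E) = {w, f w} := by
      ext z
      simp only [Set.mem_univ, Set.mem_insert_iff, Set.mem_singleton_iff, true_iff]
      by_cases hz : z = w
      · exact Or.inl hz
      · exact Or.inr (h z hz)
    have h2 : Nat.card E = 2 := by
      rw [← Set.ncard_univ, huniv, Set.ncard_pair (Ne.symm hw)]
    exact hcard h2
  obtain ⟨z0, hz0w, hz0f⟩ := h3
  -- everything outside {w, f w} maps to f w
  have step1 : ∀ z : E, z ≠ w → z ≠ f w → f z = f w := by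
    intro z hzw hzf
    rcases key z w hzw with h1 | ⟨_, h2⟩ | ⟨_, h3'⟩
    · exact h1
    · exact absurd h2 hw
    · exact absurd h3'.symm hzf
  -- f (f w) = f w
  have step2 : f (f w) = f w := by
    rcases key (f w) w hw with h1 | ⟨_, h2⟩ | ⟨hfc, _⟩
    · exact h1
    · exact absurd h2 hw
    · -- f (f w) = w ; derive contradiction using z0
      have hfz0 : f z0 = f w := step1 z0 hz0w hz0f
      rcases key z0 (f w) hz0f with h1 | ⟨_, h2⟩ | ⟨_, h3'⟩
      · rw [hfz0, hfc] at h1; exact absurd h1 hw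
      · rw [hfc] at h2; exact absurd h2.symm hw
      · rw [hfc] at h3'; exact absurd h3'.symm hz0w
  refine Or.inr ⟨f w, fun z => ?_⟩
  by_cases hzw : z = w
  · rw [hzw]
  · by_cases hzf : z = f w
    · rw [hzf, step2]
    · exact step1 z hzw hzf
end

section
/- Let A be an abelian group and define three equivalence relations on A × A by: (x,y) ≃₁ (x',y') iff x = x'; (x,y) ≃₂ (x',y') iff y = y'; (x,y) ≃₀ (x',y') iff x + y = x' + y'. A map f : A × A → A × A preserves ≃₀, ≃₁, ≃₂ if and only if there exist (x₀,y₀) ∈ A × A and an additive map h : A → A (i.e., h(x+y) = h(x) + h(y)) such that f(x,y) = (x₀,y₀) + (h(x), h(y)) for all x, y. -/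
/-- A map f : A × A → A × A on the square of an abelian group preserves the
three equivalence relations ≃₀ (equal sum), ≃₁ (equal first coordinate),
≃₂ (equal second coordinate) iff it is of the form (x,y) ↦ (x₀,y₀) + (h x, h y)
for some additive map h. -/
theorem preserves_three_equivalences_iff_affine {A : Type*} [AddCommGroup A]
    (f : A × A → A × A) :
    ((∀ u v : A × A, u.1 + u.2 = v.1 + v.2 → (f u).1 + (f u).2 = (f v).1 + (f v).2) ∧
     (∀ u v : A × A, u.1 = v.1 → (f u).1 = (f v).1) ∧
     (∀ u v : A × A, u.2 = v.2 → (f u).2 = (f v).2)) ↔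
    (∃ (p : A × A) (h : A → A), (∀ x y : A, h (x + y) = h x + h y) ∧
      (∀ x y : A, f (x, y) = p + (h x, h y))) := by
  constructor
  · rintro ⟨h0, h1, h2⟩
    set g₁ : A → A := fun x => (f (x, 0)).1 with hg₁
    set g₂ : A → A := fun y => (f (0, y)).2 with hg₂
    have hf : ∀ x y : A, f (x, y) = (g₁ x, g₂ y) := by
      intro x y
      have e1 : (f (x, y)).1 = g₁ x := h1 (x, y) (x, 0) rfl
      have e2 : (f (x, y)).2 = g₂ y := h2 (x, y) (0, y) rfl
      exact Prod.ext e1 e2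
    have key : ∀ x y : A, g₁ x + g₂ y = g₁ (x + y) + g₂ 0 := by
      intro x y
      have := h0 (x, y) (x + y, 0) (by simp)
      rw [hf, hf] at this
      exact this
    have key0 : ∀ y : A, g₂ y = g₁ y - g₁ 0 + g₂ 0 := by
      intro y
      have h' := key 0 y
      simp only [zero_add] at h'
      calc g₂ y = g₁ 0 + g₂ y - g₁ 0 := by abel
        _ = g₁ y + g₂ 0 - g₁ 0 := by rw [h']
        _ = g₁ y - g₁ 0 + g₂ 0 := by abel
    refine ⟨(g₁ 0, g₂ 0), fun x => g₁ x - g₁ 0, ?_, ?_⟩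
    · intro x y
      have h' := key x y
      rw [key0 y] at h'
      show g₁ (x + y) - g₁ 0 = (g₁ x - g₁ 0) + (g₁ y - g₁ 0)
      calc g₁ (x + y) - g₁ 0 = g₁ (x + y) + g₂ 0 - g₂ 0 - g₁ 0 := by abel
        _ = g₁ x + (g₁ y - g₁ 0 + g₂ 0) - g₂ 0 - g₁ 0 := by rw [← h']
        _ = (g₁ x - g₁ 0) + (g₁ y - g₁ 0) := by abel
    · intro x y
      rw [hf, key0 y]
      refine Prod.ext ?_ ?_ <;> simp <;> abel
  · rintro ⟨p, h, hadd, hf⟩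
    refine ⟨?_, ?_, ?_⟩
    · intro u v huv
      rw [show u = (u.1, u.2) from rfl, show v = (v.1, v.2) from rfl, hf, hf]
      simp only [Prod.fst_add, Prod.snd_add]
      have hh : h u.1 + h u.2 = h v.1 + h v.2 := by
        rw [← hadd, ← hadd, huv]
      rw [show p.1 + h u.1 + (p.2 + h u.2) = p.1 + p.2 + (h u.1 + h u.2) by abel, hh]
      abel
    · intro u v huv
      rw [show u = (u.1, u.2) from rfl, show v = (v.1, v.2) from rfl, hf, hf, huv]; simp
    · intro u v huv
      rw [show u = (u.1, u.2) from rfl, show v = (v.1, v.2) from rfl, hf, hf, huv]; simp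
end

section
/- Let n ≥ 2 and let f : ℤⁿ → ℤⁿ. If f preserves the congruences of the group (ℤⁿ, +) associated with the subgroups ℤ_(k) = {x ∈ ℤⁿ : x_i = 0 for all i ≠ k} and ℤ_(k,l) = {x ∈ ℤⁿ : x_i = 0 for i ∉ {k,l} and x_k = -x_l} for all k, l < n, then there exist a ∈ ℤⁿ and m ∈ ℤ such that f(x) = a + m·x for all x ∈ ℤⁿ. -/
/-!
Preserving the congruence of `ℤ_(k)` says that changing `x` in coordinate `k` only can change
`f x` in coordinate `k` only; changing coordinates one at a time, `(f x) k` depends on `x k`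
alone, say `(f x) k = f 0 k + ψ_k (x k)`. Moving `t` from coordinate `l` to coordinate `k` is a
step in `ℤ_(k,l)`, which gives `ψ_k (u + t) - ψ_k u = ψ_l t` for `k ≠ l`. Hence all `ψ_k` are one
additive map `ℤ → ℤ`, i.e. multiplication by some `m`.
-/

/-- The subgroup ℤ_(k) of ℤⁿ: elements vanishing outside coordinate k. -/
def Zk (n : ℕ) (k : Fin n) : Set (Fin n → ℤ) :=
  {z | ∀ i : Fin n, i ≠ k → z i = 0}

/-- The subgroup ℤ_(k,l) of ℤⁿ: elements vanishing outside {k,l} with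
z k = - z l. -/
def Zkl (n : ℕ) (k l : Fin n) : Set (Fin n → ℤ) :=
  {z | (∀ i : Fin n, i ≠ k → i ≠ l → z i = 0) ∧ z k = - z l}

open Function

theorem apply_eq_apply_of_apply_eq {ι α β : Type*} [Finite ι] {f : (ι → α) → ι → β}
    (hf : ∀ k x y, (∀ i ≠ k, x i = y i) → ∀ i ≠ k, f x i = f y i)
    {x y : ι → α} {i : ι} (h : x i = y i) : f x i = f y i := by
  classical
  cases nonempty_fintype ι
  suffices key : ∀ s : Finset ι, ∀ x, (∀ j ∉ s, x j = y j) → x i = y i → f x i = f y i from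
    key Finset.univ x (fun j hj => absurd (Finset.mem_univ j) hj) h
  intro s
  induction s using Finset.induction_on with
  | empty => exact fun x hxy _ => by rw [funext fun j => hxy j (Finset.notMem_empty j)]
  | insert j s _ ih =>
    intro x hxy hi
    set z := update x j (y j)
    have hxz : f x i = f z i := by
      by_cases hij : i = j
      · subst hij
        rw [show z = x by simp [z, ← hi]]
      · exact hf j x z (fun k hk => (update_of_ne hk _ _).symm) i hij
    rw [hxz]
    refine ih z (fun k hk => ?_) ?_
    · by_cases hkj : k = j
      · simp [z, hkj]
      · simpa [z, hkj] using hxy k (by simp [hkj, hk])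
    · by_cases hij : i = j <;> simp [z, hij, hi]

theorem exists_zsmul_eq_of_sub_eq {ι G : Type*} [Nontrivial ι] [AddCommGroup G]
    (ψ : ι → ℤ → G) (h : ∀ k l, k ≠ l → ∀ u t, ψ k (u + t) - ψ k u = ψ l t) :
    ∃ m : G, ∀ k u, ψ k u = u • m := by
  obtain ⟨k₀⟩ : Nonempty ι := inferInstance
  have ψ_zero : ∀ l, ψ l 0 = 0 := fun l => by
    obtain ⟨k, hk⟩ := exists_ne l
    simpa using (h k l hk 0 0).symm
  have ψ_eq : ∀ k l, ψ k = ψ l := fun k l => by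
    by_cases hkl : k = l
    · rw [hkl]
    · exact funext fun t => by simpa [ψ_zero] using h k l hkl 0 t
  have ψ_add : ∀ u t, ψ k₀ (u + t) = ψ k₀ u + ψ k₀ t := fun u t => by
    obtain ⟨l, hl⟩ := exists_ne k₀
    have := h k₀ l hl.symm u t
    rw [ψ_eq l k₀] at this
    exact sub_eq_iff_eq_add'.mp this
  refine ⟨ψ k₀ 1, fun k u => ?_⟩
  rw [ψ_eq k k₀]
  simpa using map_zsmul (AddMonoidHom.mk' (ψ k₀) ψ_add) u 1

theorem sub_mem_Zk_iff {n : ℕ} {k : Fin n} {x y : Fin n → ℤ} :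
    x - y ∈ Zk n k ↔ ∀ i ≠ k, x i = y i := by
  simp [Zk, sub_eq_zero]

theorem single_sub_single_mem_Zkl {n : ℕ} {k l : Fin n} (hkl : k ≠ l) (t : ℤ) :
    Pi.single k t - Pi.single l t ∈ Zkl n k l := by
  refine ⟨fun i hik hil => ?_, ?_⟩ <;> simp [*, hkl.symm]

theorem apply_single_sub_apply_single {n : ℕ} {f : (Fin n → ℤ) → Fin n → ℤ}
    (hloc : ∀ x k, f x k = f (Pi.single k (x k)) k)
    (h2 : ∀ k l : Fin n, ∀ x y : Fin n → ℤ, x - y ∈ Zkl n k l → f x - f y ∈ Zkl n k l)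
    {k l : Fin n} (hkl : k ≠ l) (u t : ℤ) :
    f (Pi.single k (u + t)) k - f (Pi.single k u) k = f (Pi.single l t) l - f 0 l := by
  set x : Fin n → ℤ := Pi.single k (u + t)
  set y : Fin n → ℤ := Pi.single k u + Pi.single l t
  have hxy : x - y = Pi.single k t - Pi.single l t := by
    simp only [x, y, Pi.single_add]
    abel
  have hf := (h2 k l x y (hxy ▸ single_sub_single_mem_Zkl hkl t)).2
  simp only [Pi.sub_apply] at hf
  rw [hloc x l, hloc y k, hloc y l] at hf
  simp only [x, y, Pi.add_apply, Pi.single_eq_same, Pi.single_eq_of_ne hkl,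
    Pi.single_eq_of_ne hkl.symm, Pi.single_zero, add_zero, zero_add] at hf
  linarith

/-- If f : ℤⁿ → ℤⁿ (n ≥ 2) preserves the congruences associated with the
subgroups ℤ_(k) and ℤ_(k,l) for all k, l < n, then f is affine:
f(x) = a + m·x. -/
theorem affine_of_preserves_congruences (n : ℕ) (hn : 2 ≤ n)
    (f : (Fin n → ℤ) → (Fin n → ℤ))
    (h1 : ∀ k : Fin n, ∀ x y : Fin n → ℤ, x - y ∈ Zk n k → f x - f y ∈ Zk n k)
    (h2 : ∀ k l : Fin n, ∀ x y : Fin n → ℤ,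
      x - y ∈ Zkl n k l → f x - f y ∈ Zkl n k l) :
    ∃ (a : Fin n → ℤ) (m : ℤ), ∀ x : Fin n → ℤ, f x = a + m • x := by
  have hloc : ∀ x k, f x k = f (Pi.single k (x k)) k := fun x k =>
    apply_eq_apply_of_apply_eq
      (fun k x y hxy => sub_mem_Zk_iff.mp (h1 k x y (sub_mem_Zk_iff.mpr hxy))) (by simp)
  have : Nontrivial (Fin n) := Fin.nontrivial_iff_two_le.mpr hn
  obtain ⟨m, hm⟩ := exists_zsmul_eq_of_sub_eq (fun k u => f (Pi.single k u) k - f 0 k)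
    fun k l hkl u t => by
      have := apply_single_sub_apply_single hloc h2 hkl u t
      linarith
  refine ⟨f 0, m, fun x => funext fun k => ?_⟩
  have := hm k (x k)
  simp only [smul_eq_mul] at this
  rw [hloc x k, Pi.add_apply, Pi.smul_apply, smul_eq_mul, mul_comm m]
  linarith
end

section
/- Let V be a residuated join-semilattice with least element 0 (i.e., for all x, y the set {z : x ≤ y ∨ z} has a least element x∖y). Then the map d_V(x,y) = (x∖y) ∨ (y∖x) is an ultrametric distance over V satisfying d_V(0,x) = x, and it is the least ultrametric distance on V with this property. -/
/-- In a residuated join-semilattice with least element ⊥, the map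
d_V(x,y) = (x∖y) ⊔ (y∖x) is an ultrametric distance satisfying d_V(⊥,x) = x,
and it is the least ultrametric distance on V with this property. -/
theorem residual_distance_least_ultrametric {V : Type*} [SemilatticeSup V]
    [OrderBot V] (res : V → V → V)
    (hres : ∀ x y : V, x ≤ y ⊔ res x y ∧ ∀ z : V, x ≤ y ⊔ z → res x y ≤ z) :
    (∀ x y : V, res x y ⊔ res y x = ⊥ ↔ x = y) ∧
    (∀ x y : V, res x y ⊔ res y x = res y x ⊔ res x y) ∧
    (∀ x y z : V,
      res x y ⊔ res y x ≤ (res x z ⊔ res z x) ⊔ (res z y ⊔ res y z)) ∧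
    (∀ x : V, res (⊥ : V) x ⊔ res x (⊥ : V) = x) ∧
    (∀ d : V → V → V,
      (∀ x y : V, d x y = ⊥ ↔ x = y) →
      (∀ x y : V, d x y = d y x) →
      (∀ x y z : V, d x y ≤ d x z ⊔ d z y) →
      (∀ x : V, d ⊥ x = x) →
      ∀ x y : V, res x y ⊔ res y x ≤ d x y) := by
  have hle : ∀ x y : V, res x y = ⊥ ↔ x ≤ y := by
    intro x y
    constructor
    · intro h
      have := (hres x y).1
      simpa [h] using this
    · intro h
      exact le_bot_iff.mp ((hres x y).2 ⊥ (by simpa using h))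
  have htri : ∀ x y z : V, res x y ≤ res x z ⊔ res z y := by
    intro x y z
    apply (hres x y).2
    calc x ≤ z ⊔ res x z := (hres x z).1
      _ ≤ (y ⊔ res z y) ⊔ res x z := sup_le_sup_right (hres z y).1 _
      _ = y ⊔ (res x z ⊔ res z y) := by
        rw [sup_assoc, sup_comm (res z y)]
  refine ⟨?_, ?_, ?_, ?_, ?_⟩
  · intro x y
    constructor
    · intro h
      have h1 : res x y = ⊥ := le_bot_iff.mp (le_sup_left.trans h.le)
      have h2 : res y x = ⊥ := le_bot_iff.mp (le_sup_right.trans h.le)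
      exact le_antisymm ((hle x y).mp h1) ((hle y x).mp h2)
    · intro h
      subst h
      rw [(hle x x).mpr le_rfl, sup_idem]
  · intro x y; exact sup_comm _ _
  · intro x y z
    refine sup_le ?_ ?_
    · exact (htri x y z).trans (sup_le_sup le_sup_left le_sup_left)
    · exact (htri y x z).trans
        ((sup_le_sup le_sup_right le_sup_right).trans (sup_comm _ _).le)
  · intro x
    have h1 : res (⊥ : V) x = ⊥ := (hle ⊥ x).mpr bot_le
    have h2 : res x (⊥ : V) = x := by
      refine le_antisymm ((hres x ⊥).2 x (by simp)) ?_
      simpa using (hres x ⊥).1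
    rw [h1, h2, bot_sup_eq]
  · intro d hd0 hdsym hdtri hdbot x y
    refine sup_le ?_ ?_
    · apply (hres x y).2
      calc x = d ⊥ x := (hdbot x).symm
        _ ≤ d ⊥ y ⊔ d y x := hdtri ⊥ x y
        _ = y ⊔ d x y := by rw [hdbot, hdsym y x]
    · apply (hres y x).2
      calc y = d ⊥ y := (hdbot y).symm
        _ ≤ d ⊥ x ⊔ d x y := hdtri ⊥ y x
        _ = x ⊔ d x y := by rw [hdbot]
end

section
/- In an algebraic lattice L, if x and y are compact elements and the residual x∖y exists (the least z with x ≤ y ∨ z), then x∖y is compact. -/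
/-! The residual `r` is the join of the compact elements below it. Compactness of `x` lets
`x ≤ y ⊔ r` be witnessed by `y` together with finitely many of them, so by minimality `r` is
already their finite join, which is compact. -/

section

variable {α : Type*} [CompleteLattice α]

theorem IsCompactElement.exists_finset_le_sup_sup_of_le_sup_sSup [DecidableEq α] {k : α}
    (hk : IsCompactElement k) {y : α} {s : Set α} (h : k ≤ y ⊔ sSup s) :
    ∃ t : Finset α, ↑t ⊆ s ∧ k ≤ y ⊔ t.sup id := by
  obtain ⟨t, hts, hkt⟩ :=
    (CompleteLattice.isCompactElement_iff_exists_le_sSup_of_le_sSup α k).mp hk (insert y s)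
      (by rwa [sSup_insert])
  refine ⟨t.erase y, by rwa [Finset.coe_erase, Set.sdiff_singleton_subset_iff], ?_⟩
  calc k ≤ t.sup id := hkt
    _ ≤ (insert y (t.erase y)).sup id := Finset.sup_mono (Finset.insert_erase_subset y t)
    _ = y ⊔ (t.erase y).sup id := Finset.sup_insert

theorem isCompactElement_of_isLeast_le_sup [IsCompactlyGenerated α] {x y r : α}
    (hx : IsCompactElement x) (hr : IsLeast {z | x ≤ y ⊔ z} r) : IsCompactElement r := by
  classical
  obtain ⟨t, hts, hxt⟩ := hx.exists_finset_le_sup_sup_of_le_sup_sSup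
    (s := {c | IsCompactElement c ∧ c ≤ r}) (by rw [sSup_compact_le_eq]; exact hr.1)
  have hrt : r = t.sup id :=
    le_antisymm (hr.2 hxt) (Finset.sup_le fun c hc => (hts hc).2)
  rw [hrt]
  exact CompleteLattice.isCompactElement_finsetSup t fun c hc => (hts hc).1

end

theorem residual_compact_of_compact_general {L : Type*} [CompleteLattice L]
    [IsCompactlyGenerated L] (x y r : L)
    (hx : IsCompactElement x)
    (hr : x ≤ y ⊔ r ∧ ∀ z : L, x ≤ y ⊔ z → r ≤ z) :
    IsCompactElement r :=
  isCompactElement_of_isLeast_le_sup hx ⟨hr.1, fun z hz => hr.2 z hz⟩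

/-- In an algebraic (i.e., compactly generated complete) lattice, the residual
of two compact elements, when it exists, is compact. -/
theorem residual_compact_of_compact {L : Type*} [CompleteLattice L]
    [IsCompactlyGenerated L] (x y r : L)
    (hx : IsCompactElement x)
    (hy : IsCompactElement y)
    (hr : x ≤ y ⊔ r ∧ ∀ z : L, x ≤ y ⊔ z → r ≤ z) :
    IsCompactElement r :=
  residual_compact_of_compact_general x y r hx hr
end
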